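/- Let a : ℕ → ℍ and f : ℍ → ℍ satisfy the Bohr hypotheses, and assume additionally that a 0 = (α : ℍ) for a real number α with 0 ≤ α < 1. Then for every n ≥ 1 one has ‖a n‖ < 2^(n+1) · (1 − α). -/

import Mathlib

/-!
Choose a unit imaginary `J` whose slice `ℝ + ℝJ ≅ ℂ` contains `a n`. On that slice the real part
of `f` is the real part of a complex power series `∑ zᵐ bₘ` with `‖bₙ‖ = ‖a n‖`, `Re b₀ = α`, whose
real part stays below `1` on the unit disc. For such a series Carathéodory's inequality
`‖bₙ‖ ≤ 2 (1 - Re b₀)` holds: on the circle of radius `r < 1`, with `u` the real part there,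
`π rⁿ bₙ = ∫ (u - 1) e^{-inθ} dθ`, whose modulus is at most `∫ (1 - u) = 2π (1 - Re b₀)`;
then let `r → 1`. Finally `2 (1 - α) < 2ⁿ⁺¹ (1 - α)`.
-/

local notation "ℍ" => Quaternion ℝ

/-- `(f, a)` satisfies the Bohr hypotheses: `f` is continuous on the closed unit ball,
agrees with the power series `∑ qⁿ · a n` on the open unit ball, and `‖f‖ < 1` on the
closed unit ball. -/
def BohrHypotheses (f : ℍ → ℍ) (a : ℕ → ℍ) : Prop :=
  ContinuousOn f {q : ℍ | ‖q‖ ≤ 1} ∧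
  (∀ q : ℍ, ‖q‖ < 1 → HasSum (fun n => q ^ n * a n) (f q)) ∧
  (∀ q : ℍ, ‖q‖ ≤ 1 → ‖f q‖ < 1)

open Complex ComplexConjugate Filter Topology
open scoped Real

theorem integral_exp_int_mul_I (k : ℤ) :
    ∫ θ in (0 : ℝ)..2 * π, cexp (k * θ * I) = if k = 0 then 2 * π else 0 := by
  split_ifs with hk
  · simp [hk]
  · have hc : (k * I : ℂ) ≠ 0 := mul_ne_zero (Int.cast_ne_zero.2 hk) I_ne_zero
    simp_rw [mul_right_comm _ _ I]
    rw [integral_exp_mul_complex hc]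
    push_cast
    rw [show (k : ℂ) * I * (2 * π) = k * (2 * π * I) by ring, exp_int_mul_two_pi_mul_I]
    simp

theorem integral_exp_neg_nat_mul_I {n : ℕ} (hn : n ≠ 0) :
    ∫ θ in (0 : ℝ)..2 * π, cexp (-(n * θ * I)) = 0 := by
  simpa [hn, neg_mul] using integral_exp_int_mul_I (-n)

theorem integral_re_mul_exp_neg (β : ℂ) (m n : ℕ) :
    ∫ θ in (0 : ℝ)..2 * π, ((cexp (θ * I) ^ m * β).re : ℂ) * cexp (-(n * θ * I)) =
      π * ((if m = n then β else 0) + if m + n = 0 then conj β else 0) := by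
  have hexp : ∀ θ : ℝ, ((cexp (θ * I) ^ m * β).re : ℂ) * cexp (-(n * θ * I)) =
      β / 2 * cexp (((m - n : ℤ) : ℂ) * θ * I) +
        conj β / 2 * cexp (((-(m + n) : ℤ) : ℂ) * θ * I) := by
    intro θ
    rw [re_eq_add_conj, map_mul, map_pow, ← exp_conj, ← exp_nat_mul, ← exp_nat_mul]
    simp only [map_mul, conj_ofReal, conj_I]
    have h₁ : cexp (((m - n : ℤ) : ℂ) * θ * I) = cexp (m * (θ * I)) * cexp (-(n * θ * I)) := by
      rw [← exp_add]; push_cast; ring_nf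
    have h₂ : cexp (((-(m + n) : ℤ) : ℂ) * θ * I) =
        cexp (m * (θ * -I)) * cexp (-(n * θ * I)) := by
      rw [← exp_add]; push_cast; ring_nf
    rw [h₁, h₂]
    ring
  simp_rw [hexp]
  rw [intervalIntegral.integral_add (Continuous.intervalIntegrable (by fun_prop) _ _)
      (Continuous.intervalIntegrable (by fun_prop) _ _), intervalIntegral.integral_const_mul,
    intervalIntegral.integral_const_mul, integral_exp_int_mul_I, integral_exp_int_mul_I]
  simp only [sub_eq_zero, Int.natCast_inj, neg_eq_zero]
  norm_cast
  split_ifs <;> push_cast <;> ring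

theorem abs_re_pow_mul_le {z : ℂ} (hz : ‖z‖ = 1) (m : ℕ) (β : ℂ) : |(z ^ m * β).re| ≤ ‖β‖ :=
  (abs_re_le_norm _).trans_eq (by simp [hz])

theorem integral_tsum_re_mul_exp_neg {β : ℕ → ℂ} (hβ : Summable (‖β ·‖)) (n : ℕ) :
    ∫ θ in (0 : ℝ)..2 * π,
        ((∑' m, (cexp (θ * I) ^ m * β m).re : ℝ) : ℂ) * cexp (-(n * θ * I)) =
      π * (β n + if n = 0 then conj (β 0) else 0) := by
  have hunit : ∀ θ : ℝ, ‖cexp (θ * I)‖ = 1 := fun θ => norm_exp_ofReal_mul_I θ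
  have hunit' : ∀ θ : ℝ, ‖cexp (-(n * θ * I))‖ = 1 := fun θ => by simp [norm_exp]
  have hterms : HasSum
      (fun m => ∫ θ in (0 : ℝ)..2 * π, ((cexp (θ * I) ^ m * β m).re : ℂ) * cexp (-(n * θ * I)))
      (∫ θ in (0 : ℝ)..2 * π,
        ((∑' m, (cexp (θ * I) ^ m * β m).re : ℝ) : ℂ) * cexp (-(n * θ * I))) := by
    refine intervalIntegral.hasSum_integral_of_dominated_convergence (fun m _ => ‖β m‖)
      (fun m => (Continuous.aestronglyMeasurable (by fun_prop)))
      (fun m => Eventually.of_forall fun θ _ => ?_) (Eventually.of_forall fun _ _ => hβ)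
      intervalIntegrable_const (Eventually.of_forall fun θ _ => ?_)
    · rw [norm_mul, norm_real, Real.norm_eq_abs, hunit', mul_one]
      exact abs_re_pow_mul_le (hunit θ) m (β m)
    · exact ((Summable.of_norm_bounded hβ (abs_re_pow_mul_le (hunit θ) · _)).hasSum.mapL
        ofRealCLM).mul_right _
  simp only [integral_re_mul_exp_neg] at hterms
  refine hterms.unique ?_
  convert hasSum_single (f := fun m => (π : ℂ) *
    ((if m = n then β m else 0) + if m + n = 0 then conj (β m) else 0)) n
    (fun m hm => by simp only [hm, if_false, zero_add, mul_eq_zero, ite_eq_right_iff]; omega)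
    using 2
  rcases eq_or_ne n 0 with rfl | hn <;> simp [*]

theorem norm_coeff_le_two_mul_one_sub_re_of_norm_eq_one {β : ℕ → ℂ} (hβ : Summable (‖β ·‖))
    (hle : ∀ z : ℂ, ‖z‖ = 1 → ∑' m, (z ^ m * β m).re ≤ 1) {n : ℕ} (hn : n ≠ 0) :
    ‖β n‖ ≤ 2 * (1 - (β 0).re) := by
  set u : ℝ → ℝ := fun θ => ∑' m, (cexp (θ * I) ^ m * β m).re
  have hunit : ∀ θ : ℝ, ‖cexp (θ * I)‖ = 1 := fun θ => norm_exp_ofReal_mul_I θ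
  have hu_cont : Continuous u :=
    continuous_tsum (fun m => by fun_prop) hβ fun m θ => abs_re_pow_mul_le (hunit θ) m (β m)
  have hmean : ∫ θ in (0 : ℝ)..2 * π, u θ = π * (2 * (β 0).re) := by
    have h := integral_tsum_re_mul_exp_neg hβ 0
    simp only [CharP.cast_eq_zero, zero_mul, neg_zero, exp_zero, mul_one, if_true,
      add_conj, intervalIntegral.integral_ofReal] at h
    exact_mod_cast h
  have hcoeff : ∫ θ in (0 : ℝ)..2 * π, ((u θ - 1 : ℝ) : ℂ) * cexp (-(n * θ * I)) = π * β n := by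
    simp only [ofReal_sub, ofReal_one, sub_mul, one_mul]
    rw [intervalIntegral.integral_sub (Continuous.intervalIntegrable (by fun_prop) _ _)
      (Continuous.intervalIntegrable (by fun_prop) _ _), integral_tsum_re_mul_exp_neg hβ n,
      integral_exp_neg_nat_mul_I hn, if_neg hn]
    ring
  have hπ : π * ‖β n‖ ≤ π * (2 * (1 - (β 0).re)) := calc
    π * ‖β n‖ = ‖∫ θ in (0 : ℝ)..2 * π, ((u θ - 1 : ℝ) : ℂ) * cexp (-(n * θ * I))‖ := by
      rw [hcoeff, norm_mul, norm_real, Real.norm_of_nonneg Real.pi_pos.le]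
    _ ≤ ∫ θ in (0 : ℝ)..2 * π, ‖((u θ - 1 : ℝ) : ℂ) * cexp (-(n * θ * I))‖ :=
      intervalIntegral.norm_integral_le_integral_norm (by positivity)
    _ = ∫ θ in (0 : ℝ)..2 * π, (1 - u θ) := by
      refine intervalIntegral.integral_congr fun θ _ => ?_
      rw [norm_mul, norm_real, Real.norm_of_nonpos (by linarith [hle _ (hunit θ)])]
      simp [norm_exp]
    _ = π * (2 * (1 - (β 0).re)) := by
      rw [intervalIntegral.integral_sub intervalIntegrable_const (hu_cont.intervalIntegrable _ _),
        hmean, intervalIntegral.integral_const, smul_eq_mul]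
      ring
  exact le_of_mul_le_mul_left hπ Real.pi_pos

theorem norm_coeff_mul_pow_le_two_mul_one_sub_re {b : ℕ → ℂ} {r : ℝ} (hr : 0 ≤ r)
    (hb : Summable fun m => ‖b m‖ * r ^ m)
    (hle : ∀ z : ℂ, ‖z‖ = r → ∑' m, (z ^ m * b m).re ≤ 1) {n : ℕ} (hn : n ≠ 0) :
    ‖b n‖ * r ^ n ≤ 2 * (1 - (b 0).re) := by
  have hnorm : ∀ m, ‖(r : ℂ) ^ m * b m‖ = ‖b m‖ * r ^ m := fun m => by
    rw [norm_mul, norm_pow, norm_real, Real.norm_of_nonneg hr, mul_comm]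
  have h := norm_coeff_le_two_mul_one_sub_re_of_norm_eq_one (β := fun m => (r : ℂ) ^ m * b m)
    (by simpa only [hnorm] using hb) (fun z hz => ?_) hn
  · simpa only [hnorm, pow_zero, one_mul] using h
  · simpa only [mul_pow, mul_left_comm, mul_comm] using
      hle (r * z) (by rw [norm_mul, hz, norm_real, Real.norm_of_nonneg hr, mul_one])

theorem norm_coeff_le_two_mul_one_sub_re {b : ℕ → ℂ}
    (hb : ∀ r : ℝ, 0 ≤ r → r < 1 → Summable fun m => ‖b m‖ * r ^ m)
    (hle : ∀ z : ℂ, ‖z‖ < 1 → ∑' m, (z ^ m * b m).re ≤ 1) {n : ℕ} (hn : n ≠ 0) :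
    ‖b n‖ ≤ 2 * (1 - (b 0).re) := by
  have hlim : Tendsto (fun r : ℝ => ‖b n‖ * r ^ n) (𝓝[<] 1) (𝓝 ‖b n‖) := by
    have hcont : Continuous fun r : ℝ => ‖b n‖ * r ^ n := by fun_prop
    simpa using (hcont.tendsto 1).mono_left nhdsWithin_le_nhds
  refine le_of_tendsto hlim ?_
  filter_upwards [Ioo_mem_nhdsLT zero_lt_one] with r hr
  exact norm_coeff_mul_pow_le_two_mul_one_sub_re hr.1.le (hb r hr.1.le hr.2)
    (fun z hz => hle z (hz ▸ hr.2)) hn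

theorem summable_mul_pow_of_tendsto_zero {c : ℕ → ℝ} {ρ r : ℝ}
    (hc : Tendsto (fun m => c m * ρ ^ m) atTop (𝓝 0)) (hr : 0 ≤ r) (hrρ : r < ρ) :
    Summable fun m => c m * r ^ m := by
  have hρ : 0 < ρ := hr.trans_lt hrρ
  refine summable_of_isBigO_nat (summable_geometric_of_lt_one (div_nonneg hr hρ.le)
    ((div_lt_one hρ).2 hrρ)) ?_
  refine ((hc.isBigO_one ℝ).mul (Asymptotics.isBigO_refl (fun m : ℕ => (r / ρ) ^ m) atTop)).congr
    (fun m => ?_) fun m => one_mul _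
  rw [div_pow, mul_assoc, mul_div_cancel₀ _ (pow_ne_zero m hρ.ne')]

theorem Quaternion.abs_re_le_norm (q : ℍ) : |q.re| ≤ ‖q‖ := by
  simpa [inner_def] using abs_real_inner_le_norm q 1

theorem Quaternion.star_eq_neg_of_mul_self_eq_neg_one {J : ℍ} (hJ : J * J = -1) :
    star J = -J := by
  have hnorm : ‖J‖ * ‖J‖ = 1 := by simpa using congrArg norm hJ
  have hJ0 : J ≠ 0 := by rintro rfl; simp at hnorm
  refine mul_right_cancel₀ hJ0 ?_
  rw [star_mul_self, normSq_eq_norm_mul_self, hnorm, neg_mul, hJ, coe_one, neg_neg]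

noncomputable def Quaternion.sliceCoord (J q : ℍ) : ℂ := ⟨q.re, -(J * q).re⟩

section Slice

variable {J : ℍ} (hJ : J * J = -1)

theorem Quaternion.re_lift (z : ℂ) : (Complex.lift ⟨J, hJ⟩ z).re = z.re := by
  simp [star_eq_neg.1 (star_eq_neg_of_mul_self_eq_neg_one hJ)]

theorem Quaternion.star_lift (z : ℂ) :
    star (Complex.lift ⟨J, hJ⟩ z) = Complex.lift ⟨J, hJ⟩ (conj z) := by
  simp [star_eq_neg_of_mul_self_eq_neg_one hJ]

theorem Quaternion.norm_lift (z : ℂ) : ‖Complex.lift ⟨J, hJ⟩ z‖ = ‖z‖ := by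
  have h : normSq (Complex.lift ⟨J, hJ⟩ z) = Complex.normSq z := by
    apply coe_injective
    rw [← self_mul_star, star_lift hJ, ← map_mul, mul_conj]
    simp
  rw [normSq_eq_norm_mul_self, Complex.normSq_eq_norm_sq, sq] at h
  exact (mul_self_inj (norm_nonneg _) (norm_nonneg _)).1 h

theorem Quaternion.re_lift_mul (z : ℂ) (q : ℍ) :
    (Complex.lift ⟨J, hJ⟩ z * q).re = (z * sliceCoord J q).re := by
  simp [add_mul, coe_mul_eq_smul, sliceCoord,
    star_eq_neg.1 (star_eq_neg_of_mul_self_eq_neg_one hJ)]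
  ring

theorem Quaternion.sliceCoord_lift (z : ℂ) : sliceCoord J (Complex.lift ⟨J, hJ⟩ z) = z := by
  have hJz : J * Complex.lift ⟨J, hJ⟩ z = Complex.lift ⟨J, hJ⟩ (I * z) := by simp [map_mul]
  apply Complex.ext
  · exact re_lift hJ z
  · change -(J * Complex.lift ⟨J, hJ⟩ z).re = z.im
    rw [hJz, re_lift hJ]
    simp

end Slice

theorem Quaternion.norm_sliceCoord_le {J : ℍ} (hJ : J * J = -1) (q : ℍ) :
    ‖sliceCoord J q‖ ≤ ‖q‖ := by
  set w := sliceCoord J q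
  -- test `re_lift_mul` against `z = conj w`
  have h : ‖w‖ * ‖w‖ ≤ ‖w‖ * ‖q‖ := calc
    ‖w‖ * ‖w‖ = (conj w * w).re := by rw [conj_mul', ← sq]; norm_cast
    _ = (Complex.lift ⟨J, hJ⟩ (conj w) * q).re := (re_lift_mul hJ _ _).symm
    _ ≤ ‖Complex.lift ⟨J, hJ⟩ (conj w) * q‖ := (le_abs_self _).trans (abs_re_le_norm _)
    _ = ‖w‖ * ‖q‖ := by rw [norm_mul, norm_lift hJ, norm_conj]
  nlinarith [norm_nonneg w, norm_nonneg q]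

theorem Quaternion.exists_lift_eq (q : ℍ) :
    ∃ (J : ℍ) (hJ : J * J = -1) (z : ℂ), Complex.lift ⟨J, hJ⟩ z = q := by
  by_cases h : q.im = 0
  · have hJ : (⟨0, 1, 0, 0⟩ : ℍ) * ⟨0, 1, 0, 0⟩ = -1 := by ext <;> simp
    refine ⟨_, hJ, q.re, ?_⟩
    conv_rhs => rw [← re_add_im q, h, add_zero]
    simp
  · have hn : ‖q.im‖ ≠ 0 := norm_ne_zero_iff.2 h
    have hJ : (‖q.im‖⁻¹ • q.im) * (‖q.im‖⁻¹ • q.im) = -1 := by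
      rw [smul_mul_smul, ← sq, ← sq, im_sq, normSq_eq_norm_mul_self, ← sq, smul_neg,
        ← coe_mul_eq_smul, ← coe_mul, inv_pow, inv_mul_cancel₀ (pow_ne_zero 2 hn), coe_one]
    refine ⟨_, hJ, ⟨q.re, ‖q.im‖⟩, ?_⟩
    simp [smul_smul, hn]

theorem Quaternion.exists_norm_sliceCoord_eq (q : ℍ) :
    ∃ (J : ℍ) (_ : J * J = -1), ‖sliceCoord J q‖ = ‖q‖ := by
  obtain ⟨J, hJ, z, rfl⟩ := exists_lift_eq q
  exact ⟨J, hJ, by rw [sliceCoord_lift, norm_lift]⟩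

namespace BohrHypotheses

variable {f : ℍ → ℍ} {a : ℕ → ℍ}

theorem summable_norm_mul_pow (h : BohrHypotheses f a) {r : ℝ} (hr0 : 0 ≤ r) (hr1 : r < 1) :
    Summable fun m => ‖a m‖ * r ^ m := by
  obtain ⟨ρ, hrρ, hρ1⟩ := exists_between hr1
  have hρ : 0 ≤ ρ := hr0.trans hrρ.le
  have hsum := h.2.1 ρ (by rwa [Quaternion.norm_coe, Real.norm_of_nonneg hρ])
  refine summable_mul_pow_of_tendsto_zero ?_ hr0 hrρ
  simpa [norm_mul, abs_of_nonneg hρ, mul_comm] using hsum.summable.tendsto_atTop_zero.norm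

theorem tsum_re_pow_mul_sliceCoord_lt_one (h : BohrHypotheses f a) {J : ℍ} (hJ : J * J = -1)
    {z : ℂ} (hz : ‖z‖ < 1) : ∑' m, (z ^ m * Quaternion.sliceCoord J (a m)).re < 1 := by
  have hz' : ‖Complex.lift ⟨J, hJ⟩ z‖ < 1 := by rwa [Quaternion.norm_lift]
  have hsum : HasSum (fun m => (Complex.lift ⟨J, hJ⟩ z ^ m * a m).re)
      (f (Complex.lift ⟨J, hJ⟩ z)).re :=
    (h.2.1 _ hz').map (QuaternionAlgebra.reₗ ..).toAddMonoidHom Quaternion.continuous_re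
  have hterm (m : ℕ) : (z ^ m * Quaternion.sliceCoord J (a m)).re =
      (Complex.lift ⟨J, hJ⟩ z ^ m * a m).re := by
    rw [← Quaternion.re_lift_mul hJ, map_pow]
  rw [tsum_congr hterm, hsum.tsum_eq]
  exact (le_abs_self _).trans_lt ((Quaternion.abs_re_le_norm _).trans_lt (h.2.2 _ hz'.le))

end BohrHypotheses

theorem coeff_bound_weak_bohr_general
    (a : ℕ → ℍ) (f : ℍ → ℍ)
    (hBohr : BohrHypotheses f a)
    (α : ℝ) (hα1 : α < 1)
    (ha0 : a 0 = (α : ℍ)) :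
    ∀ n : ℕ, 1 ≤ n → ‖a n‖ < 2 ^ (n + 1) * (1 - α) := by
  intro n hn
  obtain ⟨J, hJ, hcoeff⟩ := Quaternion.exists_norm_sliceCoord_eq (a n)
  have hbound := norm_coeff_le_two_mul_one_sub_re (b := fun m => Quaternion.sliceCoord J (a m))
    (fun r hr0 hr1 => (hBohr.summable_norm_mul_pow hr0 hr1).of_nonneg_of_le
      (fun m => by positivity) fun m => by gcongr; exact Quaternion.norm_sliceCoord_le hJ _)
    (fun z hz => (hBohr.tsum_re_pow_mul_sliceCoord_lt_one hJ hz).le) (n := n) (by omega)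
  have hre : (Quaternion.sliceCoord J (a 0)).re = α := by simp [Quaternion.sliceCoord, ha0]
  calc ‖a n‖ = ‖Quaternion.sliceCoord J (a n)‖ := hcoeff.symm
    _ ≤ 2 * (1 - α) := by simpa only [hre] using hbound
    _ < 2 ^ (n + 1) * (1 - α) := by
      have h2 : (2 : ℝ) < 2 ^ (n + 1) := by
        simpa using pow_lt_pow_right₀ one_lt_two (show 1 < n + 1 by omega)
      exact mul_lt_mul_of_pos_right h2 (by linarith)

/-- Coefficient estimate used in the proof of the weak Bohr theorem. -/
theorem coeff_bound_weak_bohr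
    (a : ℕ → ℍ) (f : ℍ → ℍ)
    (hBohr : BohrHypotheses f a)
    (α : ℝ) (hα0 : 0 ≤ α) (hα1 : α < 1)
    (ha0 : a 0 = (α : ℍ)) :
    ∀ n : ℕ, 1 ≤ n → ‖a n‖ < 2 ^ (n + 1) * (1 - α) :=
  coeff_bound_weak_bohr_general a f hBohr α hα1 ha0
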